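/- Let (𝔤, ω) be a symplectic Lie algebra and consider the left symmetric product on 𝒟 := 𝔤 × 𝔤* given by (x,α)(y,β) := (xy + ad*_α y, αβ + ad*_x β). For u ∈ 𝒟 let R_u denote right multiplication v ↦ vu in 𝒟, and for y ∈ 𝔤 let R_y^𝔤 denote right multiplication x ↦ xy in 𝔤. Then for every y ∈ 𝔤 one has tr(R_{(y,0)}) = tr(R_y^𝔤), and for every β ∈ 𝔤* one has tr(R_{(0,β)}) = tr(R_{r(β)}^𝔤). -/

import Mathlib

open LinearMap

/-- The coadjoint action of `x : L` on the dual: `⟨coad x α, y⟩ = -⟨α, [x,y]⟩`. -/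
noncomputable def coad {L : Type*} [LieRing L] [LieAlgebra ℝ L]
    (x : L) (α : Module.Dual ℝ L) : Module.Dual ℝ L :=
  -(α ∘ₗ (LieAlgebra.ad ℝ L x))

/-- The product `(x,α)(y,β) = (xy + ad*_α y, αβ + ad*_x β)` on `𝒟 = 𝔤 × 𝔤*`. -/
noncomputable def dprod {L : Type*} [LieRing L] [LieAlgebra ℝ L]
    (p : L →ₗ[ℝ] L →ₗ[ℝ] L) (r : Module.Dual ℝ L →ₗ[ℝ] L)
    (cstar : Module.Dual ℝ L → L → L)
    (u v : L × Module.Dual ℝ L) : L × Module.Dual ℝ L :=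
  (p u.1 v.1 + cstar u.2 v.1, coad (r u.2) v.2 + coad u.1 v.2)

/-!
The trace of an endomorphism of `𝒟 = 𝔤 × 𝔤*` is the sum of the traces of its two diagonal
blocks. For `u = (y, 0)` these blocks of `R_u` are `R_y^𝔤` and `0`. For `u = (0, β)` they are `0`
and `(x ↦ ad*_x β) ∘ r`, while `R_{r β}^𝔤 = r ∘ (x ↦ ad*_x β)` because `ω (x · r β) = ad*_x β`;
so the two traces agree by `tr (A B) = tr (B A)`.
-/

theorem LinearMap.trace_prod_eq_add {R M N : Type*} [CommRing R]
    [AddCommGroup M] [Module R M] [Module.Free R M] [Module.Finite R M]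
    [AddCommGroup N] [Module R N] [Module.Free R N] [Module.Finite R N]
    (f : (M × N) →ₗ[R] (M × N)) :
    trace R (M × N) f =
      trace R M (fst R M N ∘ₗ f ∘ₗ inl R M N) + trace R N (snd R M N ∘ₗ f ∘ₗ inr R M N) := by
  have hf : f = inl R M N ∘ₗ (fst R M N ∘ₗ f) + inr R M N ∘ₗ (snd R M N ∘ₗ f) := by
    ext <;> simp
  conv_lhs => rw [hf]
  rw [map_add, trace_comp_comm' (fst R M N ∘ₗ f), trace_comp_comm' (snd R M N ∘ₗ f)]
  rfl

section

variable {L : Type*} [LieRing L] [LieAlgebra ℝ L]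

@[simp]
theorem coad_zero_left (α : Module.Dual ℝ L) : coad (0 : L) α = 0 := by
  simp [coad]

@[simp]
theorem coad_zero_right (x : L) : coad x (0 : Module.Dual ℝ L) = 0 := by
  simp [coad]

theorem coad_apply (x y : L) (α : Module.Dual ℝ L) : coad x α y = -α ⁅x, y⁆ := rfl

noncomputable def coadFlip (β : Module.Dual ℝ L) : L →ₗ[ℝ] Module.Dual ℝ L where
  toFun x := coad x β
  map_add' x y := by ext; simp only [coad_apply, LinearMap.add_apply, add_lie, map_add, neg_add]
  map_smul' c x := by ext; simp [coad_apply]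

theorem cstar_zero_left {ω : L →ₗ[ℝ] Module.Dual ℝ L} {r : Module.Dual ℝ L →ₗ[ℝ] L}
    {cstar : Module.Dual ℝ L → L → L}
    (hcstar : ∀ (α : Module.Dual ℝ L) (x : L) (β : Module.Dual ℝ L),
      β (cstar α x) = -((ω ⁅r α, r β⁆) x)) (x : L) :
    cstar 0 x = 0 :=
  (Module.forall_dual_apply_eq_zero_iff ℝ _).mp fun β => by simp [hcstar]

theorem mul_r_eq_r_coad {ω : L →ₗ[ℝ] Module.Dual ℝ L} {r : Module.Dual ℝ L →ₗ[ℝ] L}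
    (hr1 : ∀ α : Module.Dual ℝ L, ω (r α) = α) (hr2 : ∀ x : L, r (ω x) = x)
    {p : L →ₗ[ℝ] L →ₗ[ℝ] L} (hp : ∀ x y z : L, ω (p x y) z = -(ω y ⁅x, z⁆))
    (x : L) (β : Module.Dual ℝ L) :
    p x (r β) = r (coad x β) := by
  have hω : ω (p x (r β)) = coad x β := by
    ext z
    rw [hp, hr1, coad_apply]
  rw [← hω, hr2]

end

theorem stmt14_general {L : Type*} [LieRing L] [LieAlgebra ℝ L] [FiniteDimensional ℝ L]
    (ω : L →ₗ[ℝ] Module.Dual ℝ L)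
    (r : Module.Dual ℝ L →ₗ[ℝ] L)
    (hr1 : ∀ α : Module.Dual ℝ L, ω (r α) = α)
    (hr2 : ∀ x : L, r (ω x) = x)
    (p : L →ₗ[ℝ] L →ₗ[ℝ] L)
    (hp : ∀ x y z : L, ω (p x y) z = -(ω y ⁅x, z⁆))
    (cstar : Module.Dual ℝ L → L → L)
    (hcstar : ∀ (α : Module.Dual ℝ L) (x : L) (β : Module.Dual ℝ L),
      β (cstar α x) = -((ω ⁅r α, r β⁆) x)) :
    (∀ (y : L)
      (R : (L × Module.Dual ℝ L) →ₗ[ℝ] (L × Module.Dual ℝ L)) (Rg : L →ₗ[ℝ] L),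
      (∀ v : L × Module.Dual ℝ L, R v = dprod p r cstar v (y, 0)) →
      (∀ x : L, Rg x = p x y) →
      LinearMap.trace ℝ (L × Module.Dual ℝ L) R = LinearMap.trace ℝ L Rg) ∧
    (∀ (β : Module.Dual ℝ L)
      (R : (L × Module.Dual ℝ L) →ₗ[ℝ] (L × Module.Dual ℝ L)) (Rg : L →ₗ[ℝ] L),
      (∀ v : L × Module.Dual ℝ L, R v = dprod p r cstar v (0, β)) →
      (∀ x : L, Rg x = p x (r β)) →
      LinearMap.trace ℝ (L × Module.Dual ℝ L) R = LinearMap.trace ℝ L Rg) := by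
  have hc := cstar_zero_left hcstar
  constructor
  · intro y R Rg hR hRg
    have h𝔤 : fst ℝ _ _ ∘ₗ R ∘ₗ inl ℝ _ _ = Rg := by
      ext x; simp [hR, hRg, dprod, hc]
    have h𝔤dual : snd ℝ _ _ ∘ₗ R ∘ₗ inr ℝ _ _ = 0 := by
      ext α; simp [hR, dprod]
    rw [trace_prod_eq_add, h𝔤, h𝔤dual, map_zero, add_zero]
  · intro β R Rg hR hRg
    have h𝔤 : fst ℝ _ _ ∘ₗ R ∘ₗ inl ℝ _ _ = 0 := by
      ext x; simp [hR, dprod, hc]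
    have h𝔤dual : snd ℝ _ _ ∘ₗ R ∘ₗ inr ℝ _ _ = coadFlip β ∘ₗ r := by
      ext α; simp [hR, dprod, coadFlip]
    have hRg' : Rg = r ∘ₗ coadFlip β := by
      ext x; simp [hRg, coadFlip, mul_r_eq_r_coad hr1 hr2 hp]
    rw [trace_prod_eq_add, h𝔤, h𝔤dual, map_zero, zero_add, hRg', trace_comp_comm']

/-- for the left symmetric product on `𝒟 = 𝔤 × 𝔤*` of a symplectic Lie
algebra, the right multiplication by `(y,0)` has the same trace as right multiplication
by `y` in `𝔤`, and right multiplication by `(0,β)` has the same trace as right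
multiplication by `r β` in `𝔤`. -/
theorem stmt14 {L : Type*} [LieRing L] [LieAlgebra ℝ L] [FiniteDimensional ℝ L]
    (ω : L →ₗ[ℝ] Module.Dual ℝ L)
    (hskew : ∀ x y : L, ω x y = - ω y x)
    (hclosed : ∀ x y z : L, ω ⁅x, y⁆ z + ω ⁅y, z⁆ x + ω ⁅z, x⁆ y = 0)
    (r : Module.Dual ℝ L →ₗ[ℝ] L)
    (hr1 : ∀ α : Module.Dual ℝ L, ω (r α) = α)
    (hr2 : ∀ x : L, r (ω x) = x)
    (p : L →ₗ[ℝ] L →ₗ[ℝ] L)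
    (hp : ∀ x y z : L, ω (p x y) z = -(ω y ⁅x, z⁆))
    (cstar : Module.Dual ℝ L → L → L)
    (hcstar : ∀ (α : Module.Dual ℝ L) (x : L) (β : Module.Dual ℝ L),
      β (cstar α x) = -((ω ⁅r α, r β⁆) x)) :
    (∀ (y : L)
      (R : (L × Module.Dual ℝ L) →ₗ[ℝ] (L × Module.Dual ℝ L)) (Rg : L →ₗ[ℝ] L),
      (∀ v : L × Module.Dual ℝ L, R v = dprod p r cstar v (y, 0)) →
      (∀ x : L, Rg x = p x y) →
      LinearMap.trace ℝ (L × Module.Dual ℝ L) R = LinearMap.trace ℝ L Rg) ∧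
    (∀ (β : Module.Dual ℝ L)
      (R : (L × Module.Dual ℝ L) →ₗ[ℝ] (L × Module.Dual ℝ L)) (Rg : L →ₗ[ℝ] L),
      (∀ v : L × Module.Dual ℝ L, R v = dprod p r cstar v (0, β)) →
      (∀ x : L, Rg x = p x (r β)) →
      LinearMap.trace ℝ (L × Module.Dual ℝ L) R = LinearMap.trace ℝ L Rg) :=
  stmt14_general ω r hr1 hr2 p hp cstar hcstar
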